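/- Let m ∈ ℕ, τ ∈ ℝ^m, let A ∈ ℝ^{m×m} be symmetric with smallest eigenvalue λ_min := λ_min(A) > 0, and define J_*(τ̂) = (τ̂ − τ)ᵀ A (τ̂ − τ). Let J : ℝ^m → ℝ be differentiable and assume there are L > 0 and Δ_W ≥ 0 with ‖∇J(τ̂) − ∇J_*(τ̂)‖₂ ≤ L ‖τ̂ − τ‖₂² + Δ_W for all τ̂ ∈ ℝ^m, and that Δ_W ≤ λ_min²/(16L). Consider the iterations τ̂^{(n+1)} = τ̂^{(n)} − γ ∇J(τ̂^{(n)}) and τ̂_*^{(n+1)} = τ̂_*^{(n)} − γ ∇J_*(τ̂_*^{(n)}) with the same step size 0 < γ ≤ ‖A‖^{−1} and the same initialization τ̂^{(0)} = τ̂_*^{(0)} satisfying ‖τ̂^{(0)} − τ‖₂ ≤ λ_min/(4√2 L). Then, with ξ := 1 − γλ_min/2 ∈ [0,1), for every n ∈ ℕ, ‖τ̂^{(n)} − τ̂_*^{(n)}‖₂ ≤ ξⁿ ‖τ̂^{(0)} − τ‖₂ + (2Δ_W/λ_min)(1 − ξⁿ). -/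
import Mathlib


open scoped BigOperators RealInnerProductSpace

noncomputable def opNorm {n : Type*} [Fintype n] [DecidableEq n] (A : Matrix n n ℝ) : ℝ :=
  ‖Matrix.toEuclideanCLM (𝕜 := ℝ) A‖

/-- Smallest eigenvalue of a symmetric matrix, via the Rayleigh quotient. -/
noncomputable def minEig {m : ℕ} (A : Matrix (Fin m) (Fin m) ℝ) : ℝ :=
  ⨅ x : {x : EuclideanSpace ℝ (Fin m) // ‖x‖ = 1},
    ⟪Matrix.toEuclideanLin A x.1, x.1⟫

private lemma aux_contract {m : ℕ} (A : Matrix (Fin m) (Fin m) ℝ) (hA : A.IsSymm)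
    (hlam : 0 < minEig A) (γ : ℝ) (hγpos : 0 < γ) (hγ : γ ≤ (opNorm A)⁻¹) :
    γ * minEig A ≤ 1 ∧
      ∀ v : EuclideanSpace ℝ (Fin m),
        ‖v - γ • Matrix.toEuclideanLin A v‖ ≤ (1 - γ * minEig A) * ‖v‖ := by
  set T := Matrix.toEuclideanLin A with hT
  have hnormsq : ∀ x : EuclideanSpace ℝ (Fin m), ‖x‖^2 = ∑ i, (x i)^2 := by
    intro x
    rw [EuclideanSpace.norm_eq, Real.sq_sqrt (by positivity)]
    simp [sq_abs]
  have hTle : ∀ x, ‖T x‖ ≤ opNorm A * ‖x‖ := by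
    intro x
    have h : T x = Matrix.toEuclideanCLM (𝕜 := ℝ) A x := by
      rw [hT, ← Matrix.coe_toEuclideanCLM_eq_toEuclideanLin]; rfl
    rw [h]
    exact (Matrix.toEuclideanCLM (𝕜 := ℝ) A).le_opNorm x
  have hbdd : BddBelow (Set.range fun x : {x : EuclideanSpace ℝ (Fin m) // ‖x‖ = 1} =>
      ⟪T x.1, x.1⟫) := by
    refine ⟨-(opNorm A), ?_⟩
    rintro z ⟨x, rfl⟩
    have h1 : |⟪T x.1, x.1⟫| ≤ ‖T x.1‖ * ‖x.1‖ := abs_real_inner_le_norm _ _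
    have h2 := hTle x.1
    rw [x.2] at h1 h2
    simp only [mul_one] at h1 h2
    have := abs_le.1 h1
    linarith [this.1]
  rcases Nat.eq_zero_or_pos m with hm | hm
  · exfalso
    subst hm
    haveI : IsEmpty {x : EuclideanSpace ℝ (Fin 0) // ‖x‖ = 1} := by
      constructor
      rintro ⟨v, hv⟩
      have h0 : v = 0 := by ext i; exact Fin.elim0 i
      rw [h0, norm_zero] at hv; norm_num at hv
    have : minEig A = 0 := Real.iInf_of_isEmpty _
    rw [this] at hlam; exact lt_irrefl 0 hlam
  have hH : A.IsHermitian := by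
    rwa [Matrix.IsHermitian, Matrix.conjTranspose_eq_transpose_of_trivial]
  have hsymm : T.IsSymmetric := Matrix.isHermitian_iff_isSymmetric.1 hH
  set b := hH.eigenvectorBasis with hb
  set μ := hH.eigenvalues with hμ
  have hunit : ∀ i, ‖b i‖ = 1 := fun i => b.orthonormal.1 i
  have hTb : ∀ i, T (b i) = μ i • b i := by
    intro i
    have := hH.mulVec_eigenvectorBasis i
    ext j
    exact congrFun this j
  have hray : ∀ i, ⟪T (b i), b i⟫ = μ i := by
    intro i
    rw [hTb i, real_inner_smul_left, real_inner_self_eq_norm_sq, hunit i]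
    ring
  have hμlow : ∀ i, minEig A ≤ μ i := by
    intro i
    have := ciInf_le hbdd ⟨b i, hunit i⟩
    rwa [hray i] at this
  have hμhigh : ∀ i, μ i ≤ opNorm A := by
    intro i
    rw [← hray i]
    calc ⟪T (b i), b i⟫ ≤ |⟪T (b i), b i⟫| := le_abs_self _
      _ ≤ ‖T (b i)‖ * ‖b i‖ := abs_real_inner_le_norm _ _
      _ ≤ (opNorm A * ‖b i‖) * ‖b i‖ :=
          mul_le_mul_of_nonneg_right (hTle _) (norm_nonneg _)
      _ = opNorm A := by rw [hunit i]; ring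
  have hop : 0 < opNorm A := by
    obtain ⟨i⟩ : Nonempty (Fin m) := ⟨⟨0, hm⟩⟩
    exact lt_of_lt_of_le hlam ((hμlow i).trans (hμhigh i))
  have hγop : γ * opNorm A ≤ 1 := by
    calc γ * opNorm A ≤ (opNorm A)⁻¹ * opNorm A :=
          mul_le_mul_of_nonneg_right hγ (le_of_lt hop)
      _ = 1 := inv_mul_cancel₀ (ne_of_gt hop)
  have hγμ : ∀ i, γ * μ i ≤ 1 := fun i =>
    (mul_le_mul_of_nonneg_left (hμhigh i) hγpos.le).trans hγop
  have hγl1 : γ * minEig A ≤ 1 := by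
    obtain ⟨i⟩ : Nonempty (Fin m) := ⟨⟨0, hm⟩⟩
    exact (mul_le_mul_of_nonneg_left (hμlow i) hγpos.le).trans (hγμ i)
  refine ⟨hγl1, fun v => ?_⟩
  set w := v - γ • T v with hw
  have hreprT : ∀ i, b.repr (T v) i = μ i * b.repr v i := by
    intro i
    rw [b.repr_apply_apply, b.repr_apply_apply, ← hsymm (b i) v, hTb i,
      real_inner_smul_left]
  have hrepr : ∀ i, b.repr w i = (1 - γ * μ i) * b.repr v i := by
    intro i
    rw [hw]
    simp only [map_sub, map_smul]
    have h := hreprT i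
    simp only [PiLp.sub_apply, PiLp.smul_apply, smul_eq_mul, h]
    ring
  have hsq : ‖w‖^2 ≤ ((1 - γ * minEig A) * ‖v‖)^2 := by
    have h1 : ‖w‖ = ‖b.repr w‖ := (b.repr.norm_map w).symm
    have h2 : ‖v‖ = ‖b.repr v‖ := (b.repr.norm_map v).symm
    rw [h1, h2, mul_pow, hnormsq, hnormsq, Finset.mul_sum]
    apply Finset.sum_le_sum
    intro i _
    rw [hrepr i, mul_pow]
    have hfac : (1 - γ * μ i)^2 ≤ (1 - γ * minEig A)^2 := by
      have h3 : γ * minEig A ≤ γ * μ i := mul_le_mul_of_nonneg_left (hμlow i) hγpos.le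
      have h4 := hγμ i
      nlinarith
    nlinarith [sq_nonneg (b.repr v i), sq_nonneg (1 - γ * μ i)]
  have h5 : 0 ≤ (1 - γ * minEig A) * ‖v‖ := by
    have : 0 ≤ 1 - γ * minEig A := by linarith
    positivity
  nlinarith [norm_nonneg w]

set_option maxHeartbeats 2000000 in
/-- Comparison of gradient descent on the true objective `J` with gradient descent on the
idealized quadratic objective `J_*(τ̂) = (τ̂ − τ)ᵀ A (τ̂ − τ)` (whose gradient step, in this
paper's convention, uses `A(τ̂ − τ)`). -/
theorem gradient_descent_iterates_comparison
    (m : ℕ) (τ : EuclideanSpace ℝ (Fin m)) (A : Matrix (Fin m) (Fin m) ℝ)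
    (hA : A.IsSymm) (hlam : 0 < minEig A)
    (J : EuclideanSpace ℝ (Fin m) → ℝ) (gJ : EuclideanSpace ℝ (Fin m) → EuclideanSpace ℝ (Fin m))
    (hJ : ∀ x, HasGradientAt J (gJ x) x)
    (L ΔW : ℝ) (hL : 0 < L) (hΔW : 0 ≤ ΔW)
    (hgrad : ∀ x : EuclideanSpace ℝ (Fin m),
      ‖gJ x - Matrix.toEuclideanLin A (x - τ)‖ ≤ L * ‖x - τ‖ ^ 2 + ΔW)
    (hΔWsmall : ΔW ≤ (minEig A) ^ 2 / (16 * L))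
    (γ : ℝ) (hγpos : 0 < γ) (hγ : γ ≤ (opNorm A)⁻¹)
    (x y : ℕ → EuclideanSpace ℝ (Fin m))
    (hx : ∀ n, x (n + 1) = x n - γ • gJ (x n))
    (hy : ∀ n, y (n + 1) = y n - γ • Matrix.toEuclideanLin A (y n - τ))
    (hxy0 : x 0 = y 0)
    (hinit : ‖x 0 - τ‖ ≤ minEig A / (4 * Real.sqrt 2 * L)) :
    (0 ≤ 1 - γ * minEig A / 2 ∧ 1 - γ * minEig A / 2 < 1) ∧
    ∀ n : ℕ, ‖x n - y n‖ ≤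
      (1 - γ * minEig A / 2) ^ n * ‖x 0 - τ‖
        + (2 * ΔW / minEig A) * (1 - (1 - γ * minEig A / 2) ^ n) := by
  obtain ⟨hγl1, hcontract⟩ := aux_contract A hA hlam γ hγpos hγ
  set l := minEig A with hldef
  clear_value l
  have hl : 0 < l := hlam
  set ξ := 1 - γ * l / 2 with hξdef
  have hγlpos : 0 < γ * l := mul_pos hγpos hl
  have hξ0 : 0 ≤ ξ := by rw [hξdef]; linarith
  have hξ1 : ξ < 1 := by rw [hξdef]; linarith
  set r := ‖x 0 - τ‖ with hrdef
  set c := 2 * ΔW / l with hcdef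
  have hr0 : 0 ≤ r := norm_nonneg _
  have hc0 : 0 ≤ c := by positivity
  clear_value ξ r c
  -- numeric facts about √2
  have hs2 : Real.sqrt 2 ^ 2 = 2 := Real.sq_sqrt (by norm_num)
  have hs14 : (1.4:ℝ) ≤ Real.sqrt 2 := by nlinarith [Real.sqrt_nonneg 2]
  have hspos : (0:ℝ) < Real.sqrt 2 := by linarith
  -- key size bounds
  have hLr : L * r ≤ 3/16 * l := by
    have h1 : L * r ≤ L * (l / (4 * Real.sqrt 2 * L)) :=
      mul_le_mul_of_nonneg_left hinit hL.le
    have h2 : L * (l / (4 * Real.sqrt 2 * L)) = l / (4 * Real.sqrt 2) := by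
      field_simp
    rw [h2] at h1
    have h3 : l / (4 * Real.sqrt 2) ≤ 3/16 * l := by
      rw [div_le_iff₀ (by positivity)]
      nlinarith
    linarith
  have hLc : L * c ≤ l / 8 := by
    have hΔW' : 16 * L * ΔW ≤ l^2 := by
      have h := hΔWsmall
      rw [le_div_iff₀ (by positivity)] at h
      linarith
    have h1 : L * c = 2 * L * ΔW / l := by rw [hcdef]; ring
    rw [h1, div_le_div_iff₀ hl (by norm_num : (0:ℝ) < 8)]
    nlinarith
  have hLrc : L * (r + c) ≤ l / 2 := by nlinarith
  -- the bounding sequence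
  set B : ℕ → ℝ := fun n => ξ^n * r + c * (1 - ξ^n) with hBdef
  clear_value B
  have hξn : ∀ n : ℕ, 0 ≤ ξ^n ∧ ξ^n ≤ 1 := fun n =>
    ⟨pow_nonneg hξ0 n, pow_le_one₀ hξ0 hξ1.le⟩
  have hBle : ∀ n, B n ≤ r + c := by
    intro n
    obtain ⟨h1, h2⟩ := hξn n
    simp only [hBdef]
    have e1 : ξ^n * r ≤ r := mul_le_of_le_one_left hr0 h2
    have e2 : c * (1 - ξ^n) ≤ c := mul_le_of_le_one_right hc0 (by linarith)
    linarith
  have hB0 : ∀ n, 0 ≤ B n := by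
    intro n
    obtain ⟨h1, h2⟩ := hξn n
    simp only [hBdef]
    have e1 : 0 ≤ ξ^n * r := mul_nonneg h1 hr0
    have e2 : 0 ≤ c * (1 - ξ^n) := mul_nonneg hc0 (by linarith)
    linarith
  have hkey : c * (γ * l / 2) = γ * ΔW := by
    rw [hcdef]; field_simp
  have hBsucc : ∀ n, ξ * B n + γ * ΔW = B (n+1) := by
    intro n
    simp only [hBdef, pow_succ]
    rw [hξdef]
    linear_combination (-1 : ℝ) * hkey
  have h1γl : 0 ≤ 1 - γ * l := by linarith
  -- recursions
  have hdrec : ∀ n, ‖x (n+1) - τ‖ ≤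
      (1 - γ*l) * ‖x n - τ‖ + γ * (L * ‖x n - τ‖^2 + ΔW) := by
    intro n
    have halg : x (n+1) - τ = ((x n - τ) - γ • Matrix.toEuclideanLin A (x n - τ))
        - γ • (gJ (x n) - Matrix.toEuclideanLin A (x n - τ)) := by
      rw [hx n]; simp only [smul_sub]; abel
    rw [halg]
    refine le_trans (norm_sub_le _ _) ?_
    have h1 := hcontract (x n - τ)
    have h2 : ‖γ • (gJ (x n) - Matrix.toEuclideanLin A (x n - τ))‖ ≤
        γ * (L * ‖x n - τ‖^2 + ΔW) := by
      rw [norm_smul, Real.norm_eq_abs, abs_of_pos hγpos]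
      exact mul_le_mul_of_nonneg_left (hgrad (x n)) hγpos.le
    exact add_le_add h1 h2
  have herec : ∀ n, ‖x (n+1) - y (n+1)‖ ≤
      (1 - γ*l) * ‖x n - y n‖ + γ * (L * ‖x n - τ‖^2 + ΔW) := by
    intro n
    have hTsub : Matrix.toEuclideanLin A (x n - y n)
        = Matrix.toEuclideanLin A (x n - τ) - Matrix.toEuclideanLin A (y n - τ) := by
      have h0 : x n - y n = (x n - τ) - (y n - τ) := by abel
      rw [h0, map_sub]
    have halg : x (n+1) - y (n+1) = ((x n - y n) - γ • Matrix.toEuclideanLin A (x n - y n))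
        - γ • (gJ (x n) - Matrix.toEuclideanLin A (x n - τ)) := by
      rw [hx n, hy n, hTsub]; simp only [smul_sub]; abel
    rw [halg]
    refine le_trans (norm_sub_le _ _) ?_
    have h1 := hcontract (x n - y n)
    have h2 : ‖γ • (gJ (x n) - Matrix.toEuclideanLin A (x n - τ))‖ ≤
        γ * (L * ‖x n - τ‖^2 + ΔW) := by
      rw [norm_smul, Real.norm_eq_abs, abs_of_pos hγpos]
      exact mul_le_mul_of_nonneg_left (hgrad (x n)) hγpos.le
    exact add_le_add h1 h2
  -- main induction
  have hmain : ∀ n, ‖x n - τ‖ ≤ B n ∧ ‖x n - y n‖ ≤ B n := by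
    intro n
    induction n with
    | zero =>
      constructor
      · simp only [hBdef, pow_zero]
        norm_num
        exact hrdef.ge
      · rw [hxy0, sub_self, norm_zero]
        exact hB0 0
    | succ n ih =>
      obtain ⟨hd, he⟩ := ih
      have hBn := hB0 n
      have hBlen := hBle n
      have hLB : L * B n ≤ l/2 :=
        le_trans (mul_le_mul_of_nonneg_left hBlen hL.le) hLrc
      have hdn0 : (0:ℝ) ≤ ‖x n - τ‖ := norm_nonneg _
      have hquad : L * ‖x n - τ‖^2 ≤ (l/2) * B n := by
        have t1 : L * ‖x n - τ‖ ≤ L * B n := mul_le_mul_of_nonneg_left hd hL.le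
        have t2 : (L * ‖x n - τ‖) * ‖x n - τ‖ ≤ (L * B n) * B n :=
          mul_le_mul t1 hd hdn0 (by positivity)
        have t3 : (L * B n) * B n ≤ (l/2) * B n := mul_le_mul_of_nonneg_right hLB hBn
        have t4 : L * ‖x n - τ‖^2 = (L * ‖x n - τ‖) * ‖x n - τ‖ := by ring
        linarith
      have u2 : γ * (L * ‖x n - τ‖^2) ≤ γ * ((l/2) * B n) :=
        mul_le_mul_of_nonneg_left hquad hγpos.le
      have hsum : (1 - γ*l) * ‖x n - τ‖ + γ * (L * ‖x n - τ‖^2 + ΔW) ≤ B (n+1) := by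
        rw [← hBsucc n, hξdef]
        have u1 : (1 - γ*l) * ‖x n - τ‖ ≤ (1 - γ*l) * B n :=
          mul_le_mul_of_nonneg_left hd h1γl
        nlinarith [u1, u2]
      have hsum' : (1 - γ*l) * ‖x n - y n‖ + γ * (L * ‖x n - τ‖^2 + ΔW) ≤ B (n+1) := by
        rw [← hBsucc n, hξdef]
        have u1 : (1 - γ*l) * ‖x n - y n‖ ≤ (1 - γ*l) * B n :=
          mul_le_mul_of_nonneg_left he h1γl
        nlinarith [u1, u2]
      exact ⟨le_trans (hdrec n) hsum, le_trans (herec n) hsum'⟩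
  refine ⟨⟨hξ0, hξ1⟩, fun n => ?_⟩
  have h := (hmain n).2
  simpa [hBdef] using h
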